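/- Among all measurable functions b : [−2,2] → ℝ satisfying 0 ≤ b(v) ≤ 1−|v|/2 and (1/2)∫_{−2}^{2} b(v) dv = 1−α, the functional Γ(b) = ∫_{−2}^{2} b(v)² dv is minimized by b*(v) = min(1−√α, 1−|v|/2), i.e., b*(v) = 1−|v|/2 for |v| ≥ 2√α and b*(v) = 1−√α for |v| < 2√α. -/

import Mathlib

open MeasureTheory Set

private lemma lin_int (a b : ℝ) : ∫ v in a..b, (1 + v/2) = (b - a) + (b^2 - a^2)/4 := by
  have h1 : IntervalIntegrable (fun _ : ℝ => (1:ℝ)) volume a b := intervalIntegrable_const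
  have h2 : IntervalIntegrable (fun v : ℝ => v/2) volume a b :=
    (intervalIntegral.intervalIntegrable_id).div_const 2
  rw [intervalIntegral.integral_add h1 h2, intervalIntegral.integral_div,
    integral_id]
  simp
  ring

private lemma lin_int' (a b : ℝ) : ∫ v in a..b, (1 - v/2) = (b - a) - (b^2 - a^2)/4 := by
  have h1 : IntervalIntegrable (fun _ : ℝ => (1:ℝ)) volume a b := intervalIntegrable_const
  have h2 : IntervalIntegrable (fun v : ℝ => v/2) volume a b :=
    (intervalIntegral.intervalIntegrable_id).div_const 2
  rw [intervalIntegral.integral_sub h1 h2, intervalIntegral.integral_div,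
    integral_id]
  simp
  ring

private lemma gcont (s : ℝ) : Continuous (fun v : ℝ => min (1-s) (1 - |v|/2)) :=
  continuous_const.min (continuous_const.sub (continuous_abs.div_const 2))

private lemma aux_int (s : ℝ) (hs0 : 0 < s) (hs1 : s < 1) :
    ∫ v in (-2:ℝ)..2, min (1-s) (1 - |v|/2) = 2 - 2*s^2 := by
  set f : ℝ → ℝ := fun v => min (1-s) (1 - |v|/2) with hf
  have hc : Continuous f := gcont s
  have hi : ∀ a b : ℝ, IntervalIntegrable f volume a b := fun a b => hc.intervalIntegrable a b
  have hsplit1 : (∫ v in (-2:ℝ)..(-2*s), f v) + ∫ v in (-2*s)..2, f v = ∫ v in (-2:ℝ)..2, f v :=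
    intervalIntegral.integral_add_adjacent_intervals (hi _ _) (hi _ _)
  have hsplit2 : (∫ v in (-2*s:ℝ)..(2*s), f v) + ∫ v in (2*s)..2, f v = ∫ v in (-2*s:ℝ)..2, f v :=
    intervalIntegral.integral_add_adjacent_intervals (hi _ _) (hi _ _)
  have e1 : ∫ v in (-2:ℝ)..(-2*s), f v = ∫ v in (-2:ℝ)..(-2*s), (1 + v/2) := by
    apply intervalIntegral.integral_congr
    intro v hv
    rw [uIcc_of_le (by nlinarith)] at hv
    have h1 : v ≤ -2*s := hv.2
    have h2 : (-2:ℝ) ≤ v := hv.1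
    have habs : |v| = -v := abs_of_nonpos (by nlinarith)
    simp only [hf, habs]
    rw [min_eq_right (by nlinarith)]
    ring
  have e2 : ∫ v in (-2*s:ℝ)..(2*s), f v = ∫ v in (-2*s:ℝ)..(2*s), (1-s) := by
    apply intervalIntegral.integral_congr
    intro v hv
    rw [uIcc_of_le (by nlinarith)] at hv
    have habs : |v| ≤ 2*s := abs_le.2 ⟨by linarith [hv.1], hv.2⟩
    simp only [hf]
    rw [min_eq_left (by nlinarith)]
  have e3 : ∫ v in (2*s:ℝ)..2, f v = ∫ v in (2*s:ℝ)..2, (1 - v/2) := by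
    apply intervalIntegral.integral_congr
    intro v hv
    rw [uIcc_of_le (by nlinarith)] at hv
    have h1 : 2*s ≤ v := hv.1
    have habs : |v| = v := abs_of_nonneg (by nlinarith)
    simp only [hf, habs]
    rw [min_eq_right (by nlinarith)]
  rw [← hsplit1, ← hsplit2, e1, e2, e3, lin_int, lin_int', intervalIntegral.integral_const]
  simp only [smul_eq_mul]
  ring

theorem stmt16 (α : ℝ) (hα0 : 0 < α) (hα1 : α < 1) :
    ∀ b : ℝ → ℝ, Measurable b →
      (∀ v ∈ Icc (-2 : ℝ) 2, 0 ≤ b v ∧ b v ≤ 1 - |v|/2) →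
      (1/2) * (∫ v in Icc (-2 : ℝ) 2, b v) = 1 - α →
      (∫ v in Icc (-2 : ℝ) 2, (min (1 - Real.sqrt α) (1 - |v|/2))^2)
        ≤ ∫ v in Icc (-2 : ℝ) 2, (b v)^2 := by
  intro b hb hbd hav
  set s := Real.sqrt α with hsdef
  have hs0 : 0 < s := Real.sqrt_pos.2 hα0
  have hs1 : s < 1 := by
    rw [hsdef, show (1:ℝ) = Real.sqrt 1 by simp]
    exact Real.sqrt_lt_sqrt hα0.le hα1
  have hs2 : s^2 = α := Real.sq_sqrt hα0.le
  set g : ℝ → ℝ := fun v => min (1-s) (1 - |v|/2) with hg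
  have hgc : Continuous g := gcont s
  -- integral of g over Icc
  have hgint : ∫ v in Icc (-2:ℝ) 2, g v = 2 - 2*α := by
    rw [MeasureTheory.integral_Icc_eq_integral_Ioc,
      ← intervalIntegral.integral_of_le (by norm_num : (-2:ℝ) ≤ 2), aux_int s hs0 hs1, hs2]
  have hbint : ∫ v in Icc (-2:ℝ) 2, b v = 2 - 2*α := by linarith
  -- integrability
  have hfin : volume (Icc (-2:ℝ) 2) < ⊤ := measure_Icc_lt_top
  have hone : IntegrableOn (fun _ : ℝ => (1:ℝ)) (Icc (-2:ℝ) 2) :=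
    integrableOn_const hfin.ne
  have hbI : IntegrableOn b (Icc (-2:ℝ) 2) := by
    apply hone.mono' (hb.aestronglyMeasurable.restrict)
    filter_upwards [ae_restrict_mem measurableSet_Icc] with v hv
    have := hbd v hv
    have h2 : |v| ≥ 0 := abs_nonneg v
    rw [Real.norm_eq_abs, abs_of_nonneg this.1]
    linarith [this.2]
  have hb2I : IntegrableOn (fun v => (b v)^2) (Icc (-2:ℝ) 2) := by
    apply hone.mono' ((hb.pow_const 2).aestronglyMeasurable.restrict)
    filter_upwards [ae_restrict_mem measurableSet_Icc] with v hv
    have := hbd v hv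
    have h2 : |v| ≥ 0 := abs_nonneg v
    have hb1 : b v ≤ 1 := by linarith [this.2]
    rw [Real.norm_eq_abs, abs_of_nonneg (sq_nonneg _)]
    nlinarith [this.1]
  have hgI : IntegrableOn g (Icc (-2:ℝ) 2) := hgc.integrableOn_Icc
  have hg2I : IntegrableOn (fun v => (g v)^2) (Icc (-2:ℝ) 2) :=
    (hgc.pow 2).integrableOn_Icc
  -- pointwise inequality
  have hpt : ∀ v ∈ Icc (-2:ℝ) 2, (g v)^2 + 2*(1-s)*(b v - g v) ≤ (b v)^2 := by
    intro v hv
    obtain ⟨h0, h1⟩ := hbd v hv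
    have hgv : g v = min (1-s) (1 - |v|/2) := rfl
    rw [hgv]
    rcases le_total (1-s) (1 - |v|/2) with h | h
    · rw [min_eq_left h]
      nlinarith [sq_nonneg (b v - (1-s))]
    · rw [min_eq_right h]
      nlinarith [sq_nonneg (b v - (1 - |v|/2))]
  -- integrate
  have hsub : IntegrableOn (fun v => b v - g v) (Icc (-2:ℝ) 2) := by
    exact hbI.sub hgI
  have hmul : IntegrableOn (fun v => 2*(1-s)*(b v - g v)) (Icc (-2:ℝ) 2) :=
    hsub.const_mul _
  have hLHS : IntegrableOn (fun v => (g v)^2 + 2*(1-s)*(b v - g v)) (Icc (-2:ℝ) 2) :=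
    hg2I.add hmul
  have key : ∫ v in Icc (-2:ℝ) 2, ((g v)^2 + 2*(1-s)*(b v - g v))
      ≤ ∫ v in Icc (-2:ℝ) 2, (b v)^2 :=
    setIntegral_mono_on hLHS hb2I measurableSet_Icc hpt
  have expand : ∫ v in Icc (-2:ℝ) 2, ((g v)^2 + 2*(1-s)*(b v - g v))
      = (∫ v in Icc (-2:ℝ) 2, (g v)^2)
        + 2*(1-s)*((∫ v in Icc (-2:ℝ) 2, b v) - (∫ v in Icc (-2:ℝ) 2, g v)) := by
    rw [integral_add hg2I hmul, integral_const_mul, integral_sub hbI hgI]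
  rw [expand, hbint, hgint] at key
  simpa using key
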